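/- Under Assumption 1 (the loss 𝓛 is differentiable with L-Lipschitz gradient and finite infimum 𝓛*) and Assumption 2 (η < 2/(2τ+1)), the sequence of parameter iterates produced by the noiseless asynchronous block coordinate descent updates satisfies lim_{s→∞} ‖∇𝓛(Θ^(s))‖²₂ = 0. -/

import Mathlib

/-!
The descent lemma applied to the update of block `m_s` decreases the loss by about `h ‖G_s‖²`,
where `G_s` is the block gradient evaluated at the stale copy, up to an error of order
`L h ‖Θ_s - Θ̂_s‖ ‖G_s‖`. Block by block, the stale copy differs from the current iterate by at most
the last `τ` updates, so the error is bounded by `L h² (Σ_{j ∈ [s-τ, s)} ‖G_j‖² + τ ‖G_s‖²) / 2`,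
and after summing over `s` each `‖G_j‖²` is charged at most `τ` more times. For
`η (2τ + 1) < 2` the net decrease is a positive multiple of `‖G_s‖²`, so `Σ ‖G_s‖²` is finite and
`G_s → 0`. Finally every block is updated at least once in any `2 (N + 1) E` consecutive steps,
and the iterates move by at most `h` times the recent `‖G_j‖`, so by the Lipschitz bound every
block of the true gradient is close to a recently applied `G_j`.
-/

open Finset Filter

noncomputable section

/-- Projection of a parameter vector onto the coordinates of block `n`. -/
def blkProj {P N : ℕ} (blk : Fin P → Fin (N + 1)) (n : Fin (N + 1))
    (x : EuclideanSpace ℝ (Fin P)) : EuclideanSpace ℝ (Fin P) :=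
  WithLp.toLp 2 fun i => if blk i = n then x i else 0

open scoped RealInnerProductSpace

section BlockProjection

variable {P N : ℕ} (blk : Fin P → Fin (N + 1))

def blkProjₗ (n : Fin (N + 1)) : EuclideanSpace ℝ (Fin P) →ₗ[ℝ] EuclideanSpace ℝ (Fin P) where
  toFun := blkProj blk n
  map_add' x y := by ext i; by_cases h : blk i = n <;> simp [blkProj, h]
  map_smul' c x := by ext i; by_cases h : blk i = n <;> simp [blkProj, h]

lemma blkProj_sub (n : Fin (N + 1)) (x y : EuclideanSpace ℝ (Fin P)) :
    blkProj blk n (x - y) = blkProj blk n x - blkProj blk n y :=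
  map_sub (blkProjₗ blk n) x y

lemma blkProj_smul (n : Fin (N + 1)) (c : ℝ) (x : EuclideanSpace ℝ (Fin P)) :
    blkProj blk n (c • x) = c • blkProj blk n x :=
  map_smul (blkProjₗ blk n) c x

lemma blkProj_sum {ι : Type*} (n : Fin (N + 1)) (s : Finset ι)
    (f : ι → EuclideanSpace ℝ (Fin P)) :
    blkProj blk n (∑ i ∈ s, f i) = ∑ i ∈ s, blkProj blk n (f i) :=
  map_sum (blkProjₗ blk n) f s

lemma blkProj_blkProj (n m : Fin (N + 1)) (x : EuclideanSpace ℝ (Fin P)) :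
    blkProj blk m (blkProj blk n x) = if n = m then blkProj blk n x else 0 := by
  ext i
  split_ifs with h
  · subst h; by_cases hi : blk i = n <;> simp [blkProj, hi]
  · by_cases hi : blk i = n <;> simp [blkProj, hi, h]

lemma sum_blkProj (x : EuclideanSpace ℝ (Fin P)) :
    ∑ n : Fin (N + 1), blkProj blk n x = x := by
  ext i
  simp [blkProj, WithLp.ofLp_sum]

lemma inner_blkProj_right (n : Fin (N + 1)) (x y : EuclideanSpace ℝ (Fin P)) :
    ⟪x, blkProj blk n y⟫ = ⟪blkProj blk n x, blkProj blk n y⟫ := by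
  simp only [PiLp.inner_apply, RCLike.inner_apply, conj_trivial, blkProj]
  refine Finset.sum_congr rfl fun i _ => ?_
  by_cases h : blk i = n <;> simp [h]

lemma norm_blkProj_le (n : Fin (N + 1)) (x : EuclideanSpace ℝ (Fin P)) :
    ‖blkProj blk n x‖ ≤ ‖x‖ := by
  have h := real_inner_le_norm x (blkProj blk n x)
  rw [inner_blkProj_right, real_inner_self_eq_norm_sq, sq] at h
  by_cases h0 : ‖blkProj blk n x‖ = 0
  · simp [h0]
  · exact le_of_mul_le_mul_right h (lt_of_le_of_ne (norm_nonneg _) (Ne.symm h0))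

lemma norm_le_sum_norm_blkProj (x : EuclideanSpace ℝ (Fin P)) :
    ‖x‖ ≤ ∑ n : Fin (N + 1), ‖blkProj blk n x‖ := by
  conv_lhs => rw [← sum_blkProj blk x]
  exact norm_sum_le _ _

lemma sum_norm_blkProj_of_blkProj_eq {n : Fin (N + 1)} {x : EuclideanSpace ℝ (Fin P)}
    (hx : blkProj blk n x = x) : ∑ k : Fin (N + 1), ‖blkProj blk k x‖ = ‖x‖ := by
  conv_lhs => rw [← hx]
  simp_rw [blkProj_blkProj, apply_ite norm, norm_zero]
  rw [Finset.sum_ite_eq, if_pos (Finset.mem_univ n), hx]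

end BlockProjection

section Descent

variable {F : Type*} [NormedAddCommGroup F] [InnerProductSpace ℝ F] [CompleteSpace F]

lemma HasGradientAt.hasDerivAt_comp_add_smul {f : F → ℝ} {f' x d : F} {t : ℝ}
    (hf : HasGradientAt f f' (x + t • d)) :
    HasDerivAt (fun t : ℝ => f (x + t • d)) ⟪f', d⟫ t := by
  have hline : HasDerivAt (fun t : ℝ => x + t • d) d t := by
    simpa using ((hasDerivAt_id t).smul_const d).const_add x
  have := hf.hasFDerivAt.comp_hasDerivAt t hline
  rwa [InnerProductSpace.toDual_apply_apply] at this

lemma le_add_inner_add_of_lipschitz_gradient {f : F → ℝ} {g : F → F} {L : ℝ}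
    (hgrad : ∀ z, HasGradientAt f (g z) z) (hLip : ∀ z w, ‖g z - g w‖ ≤ L * ‖z - w‖) (x y : F) :
    f y ≤ f x + ⟪g x, y - x⟫ + L / 2 * ‖y - x‖ ^ 2 := by
  set d := y - x
  let u : ℝ → ℝ := fun t => f (x + t • d) - t * ⟪g x, d⟫ - L / 2 * t ^ 2 * ‖d‖ ^ 2
  have hu : ∀ t, HasDerivAt u (⟪g (x + t • d), d⟫ - ⟪g x, d⟫ - L * t * ‖d‖ ^ 2) t := by
    intro t
    refine (((hgrad (x + t • d)).hasDerivAt_comp_add_smul.sub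
      ((hasDerivAt_id t).mul_const ⟪g x, d⟫)).sub
      (((hasDerivAt_pow 2 t).const_mul (L / 2)).mul_const (‖d‖ ^ 2))).congr_deriv ?_
    simp only [one_mul, Nat.cast_ofNat]
    ring
  have hanti : AntitoneOn u (Set.Ici 0) := by
    refine antitoneOn_of_hasDerivWithinAt_nonpos (convex_Ici 0)
      (fun t _ => (hu t).continuousAt.continuousWithinAt) (fun t _ => (hu t).hasDerivWithinAt)
      fun t ht => ?_
    rw [interior_Ici, Set.mem_Ioi] at ht
    have hLipt : ‖g (x + t • d) - g x‖ ≤ L * t * ‖d‖ := by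
      simpa [norm_smul, abs_of_pos ht, mul_assoc] using hLip (x + t • d) x
    have := (real_inner_le_norm _ d).trans (mul_le_mul_of_nonneg_right hLipt (norm_nonneg d))
    rw [inner_sub_left] at this
    nlinarith
  have := hanti Set.self_mem_Ici (Set.mem_Ici.mpr zero_le_one) zero_le_one
  simp only [u, zero_smul, add_zero, one_smul, d, add_sub_cancel] at this
  linarith

end Descent

lemma two_mul_sum_mul_le_sum_sq_add_card_mul_sq {ι : Type*} (s : Finset ι) (u : ι → ℝ) (c : ℝ) :
    2 * ((∑ k ∈ s, u k) * c) ≤ ∑ k ∈ s, u k ^ 2 + #s * c ^ 2 := by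
  rw [Finset.sum_mul, Finset.mul_sum, ← nsmul_eq_mul, ← Finset.sum_const, ← Finset.sum_add_distrib]
  exact Finset.sum_le_sum fun k _ => by nlinarith [sq_nonneg (u k - c)]

lemma sum_range_sum_Ico_sub_le {a : ℕ → ℝ} (ha : ∀ i, 0 ≤ a i) (τ S : ℕ) :
    ∑ i ∈ range S, ∑ k ∈ Ico (i - τ) i, a k ≤ τ * ∑ k ∈ range S, a k := by
  rw [Finset.sum_comm' (t' := range S) (s' := fun k => (range S).filter fun i => k < i ∧ i ≤ k + τ)
    (by intro i k; simp only [mem_range, mem_Ico, mem_filter]; omega), Finset.mul_sum]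
  refine Finset.sum_le_sum fun k _ => ?_
  rw [Finset.sum_const, nsmul_eq_mul]
  refine mul_le_mul_of_nonneg_right ?_ (ha k)
  have hsub : (range S).filter (fun i => k < i ∧ i ≤ k + τ) ⊆ Ioc k (k + τ) := by
    intro i; simp only [mem_filter, mem_Ioc]; omega
  exact_mod_cast (Finset.card_le_card hsub).trans (by simp)

lemma summable_of_delayed_descent {v a : ℕ → ℝ} {A B vmin : ℝ} {τ : ℕ} (ha : ∀ i, 0 ≤ a i)
    (hv : ∀ i, vmin ≤ v i) (hB : 0 ≤ B) (hAB : B * τ < A)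
    (hstep : ∀ i, v (i + 1) ≤ v i - A * a i + B * ∑ k ∈ Ico (i - τ) i, a k) : Summable a := by
  have hpartial : ∀ S, (A - B * τ) * ∑ i ∈ range S, a i ≤ v 0 - vmin := by
    intro S
    have hsum : v S - v 0 ≤ ∑ i ∈ range S, (-A * a i + B * ∑ k ∈ Ico (i - τ) i, a k) := by
      rw [← Finset.sum_range_sub]
      exact Finset.sum_le_sum fun i _ => by linarith [hstep i]
    rw [Finset.sum_add_distrib, ← Finset.mul_sum, ← Finset.mul_sum] at hsum
    nlinarith [mul_le_mul_of_nonneg_left (sum_range_sum_Ico_sub_le ha τ S) hB, hv S]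
  refine summable_of_sum_range_le ha (c := (v 0 - vmin) / (A - B * τ)) fun S => ?_
  rw [le_div_iff₀ (by linarith), mul_comm]
  exact hpartial S

lemma tendsto_sum_Ico_sub_of_tendsto_zero {u : ℕ → ℝ} (hu : Tendsto u atTop (nhds 0)) (B : ℕ) :
    Tendsto (fun s => ∑ k ∈ Ico (s - B) s, u k) atTop (nhds 0) := by
  have hshift : Tendsto (fun s => ∑ k ∈ range B, u (s - B + k)) atTop (nhds 0) := by
    simpa using tendsto_finsetSum (range B) fun k _ =>
      hu.comp (tendsto_atTop_mono (fun s => Nat.le_add_right _ k) (tendsto_sub_atTop_nat B))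
  refine hshift.congr' ?_
  filter_upwards [eventually_ge_atTop B] with s hs
  rw [Finset.sum_Ico_eq_sum_range, Nat.sub_sub_self hs]

lemma exists_mem_window_of_forall_window {α : Type*} {m : ℕ → α} {K : ℕ}
    (hvisit : ∀ t n, ∃ j ∈ Ico (t * K) ((t + 1) * K), m j = n) {s : ℕ} (hs : K ≤ s) (n : α) :
    ∃ j, s - 2 * K ≤ j ∧ j < s ∧ m j = n := by
  obtain ⟨j, hj, hjn⟩ := hvisit (s / K - 1) n
  rw [mem_Ico] at hj
  have hK : 0 < K := Nat.pos_of_ne_zero fun hK => by simp [hK] at hj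
  have hq : 1 ≤ s / K := (Nat.one_le_div_iff hK).mpr hs
  rw [Nat.sub_one_mul, Nat.sub_add_cancel hq] at hj
  have hlo := Nat.div_mul_le_self s K
  have hhi := Nat.lt_div_mul_add (a := s) hK
  exact ⟨j, by omega, by omega, hjn⟩

section BlockIteration

variable {P N : ℕ} {blk : Fin P → Fin (N + 1)}

lemma norm_sub_le_sum_of_blockwise_stale {x : ℕ → EuclideanSpace ℝ (Fin P)}
    {m : ℕ → Fin (N + 1)} (hx : ∀ i, blkProj blk (m i) (x (i + 1) - x i) = x (i + 1) - x i)
    {y : EuclideanSpace ℝ (Fin P)} {a s : ℕ}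
    (hy : ∀ k, ∃ r, a ≤ r ∧ r ≤ s ∧ blkProj blk k y = blkProj blk k (x r)) :
    ‖x s - y‖ ≤ ∑ i ∈ Ico a s, ‖x (i + 1) - x i‖ := by
  have hblock : ∀ k,
      ‖blkProj blk k (x s - y)‖ ≤ ∑ i ∈ Ico a s, ‖blkProj blk k (x (i + 1) - x i)‖ := by
    intro k
    obtain ⟨r, har, hrs, hyr⟩ := hy k
    rw [blkProj_sub, hyr, ← blkProj_sub, ← Finset.sum_Ico_sub x hrs, blkProj_sum]
    exact (norm_sum_le _ _).trans (Finset.sum_le_sum_of_subset_of_nonneg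
      (Finset.Ico_subset_Ico_left har) fun _ _ _ => norm_nonneg _)
  calc ‖x s - y‖ ≤ ∑ k, ‖blkProj blk k (x s - y)‖ := norm_le_sum_norm_blkProj blk _
    _ ≤ ∑ k, ∑ i ∈ Ico a s, ‖blkProj blk k (x (i + 1) - x i)‖ :=
      Finset.sum_le_sum fun k _ => hblock k
    _ = ∑ i ∈ Ico a s, ‖x (i + 1) - x i‖ := by
      rw [Finset.sum_comm]
      exact Finset.sum_congr rfl fun i _ => sum_norm_blkProj_of_blkProj_eq blk (hx i)

def staleBlockGrad (blk : Fin P → Fin (N + 1))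
    (g : EuclideanSpace ℝ (Fin P) → EuclideanSpace ℝ (Fin P))
    (y : ℕ → EuclideanSpace ℝ (Fin P)) (m : ℕ → Fin (N + 1)) (i : ℕ) :
    EuclideanSpace ℝ (Fin P) :=
  blkProj blk (m i) (g (y i))

structure StaleBlockDescent (blk : Fin P → Fin (N + 1))
    (g : EuclideanSpace ℝ (Fin P) → EuclideanSpace ℝ (Fin P)) (h : ℝ) (τ : ℕ)
    (x y : ℕ → EuclideanSpace ℝ (Fin P)) (m : ℕ → Fin (N + 1)) : Prop where
  step : ∀ i, x (i + 1) = x i - h • staleBlockGrad blk g y m i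
  stale : ∀ i k, ∃ r, i - τ ≤ r ∧ r ≤ i ∧ blkProj blk k (y i) = blkProj blk k (x r)

namespace StaleBlockDescent

variable {g : EuclideanSpace ℝ (Fin P) → EuclideanSpace ℝ (Fin P)} {h : ℝ} {τ : ℕ}
  {x y : ℕ → EuclideanSpace ℝ (Fin P)} {m : ℕ → Fin (N + 1)}

local notation "G" => staleBlockGrad blk g y m

lemma succ_sub (hx : StaleBlockDescent blk g h τ x y m) (i : ℕ) :
    x (i + 1) - x i = (-h) • G i := by
  rw [hx.step i, sub_sub_cancel_left, neg_smul]

lemma blkProj_succ_sub (hx : StaleBlockDescent blk g h τ x y m) (i : ℕ) :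
    blkProj blk (m i) (x (i + 1) - x i) = x (i + 1) - x i := by
  rw [hx.succ_sub, blkProj_smul, staleBlockGrad, blkProj_blkProj, if_pos rfl]

lemma norm_succ_sub (hx : StaleBlockDescent blk g h τ x y m) (hh : 0 ≤ h) (i : ℕ) :
    ‖x (i + 1) - x i‖ = h * ‖G i‖ := by
  rw [hx.succ_sub, norm_smul, norm_neg, Real.norm_of_nonneg hh]

lemma norm_sub_le (hx : StaleBlockDescent blk g h τ x y m) (hh : 0 ≤ h) {i j : ℕ} (hij : i ≤ j) :
    ‖x j - x i‖ ≤ h * ∑ k ∈ Ico i j, ‖G k‖ := by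
  rw [← Finset.sum_Ico_sub x hij, Finset.mul_sum]
  exact (norm_sum_le _ _).trans_eq (Finset.sum_congr rfl fun k _ => hx.norm_succ_sub hh k)

lemma norm_sub_stale_le (hx : StaleBlockDescent blk g h τ x y m) (hh : 0 ≤ h) (i : ℕ) :
    ‖x i - y i‖ ≤ h * ∑ k ∈ Ico (i - τ) i, ‖G k‖ := by
  rw [Finset.mul_sum]
  exact (norm_sub_le_sum_of_blockwise_stale hx.blkProj_succ_sub (hx.stale i)).trans_eq
    (Finset.sum_congr rfl fun k _ => hx.norm_succ_sub hh k)

lemma loss_succ_le (hx : StaleBlockDescent blk g h τ x y m)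
    {f : EuclideanSpace ℝ (Fin P) → ℝ} {L : ℝ} (hgrad : ∀ z, HasGradientAt f (g z) z)
    (hLip : ∀ z w, ‖g z - g w‖ ≤ L * ‖z - w‖) (hL : 0 ≤ L) (hh : 0 ≤ h) (i : ℕ) :
    f (x (i + 1)) ≤ f (x i) - (h - L * h ^ 2 * (τ + 1) / 2) * ‖G i‖ ^ 2
      + L * h ^ 2 / 2 * ∑ k ∈ Ico (i - τ) i, ‖G k‖ ^ 2 := by
  have hdesc := le_add_inner_add_of_lipschitz_gradient hgrad hLip (x i) (x (i + 1))
  rw [hx.succ_sub, inner_smul_right, norm_smul, norm_neg, Real.norm_of_nonneg hh] at hdesc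
  have herr : ‖blkProj blk (m i) (g (x i)) - G i‖ ≤ L * (h * ∑ k ∈ Ico (i - τ) i, ‖G k‖) := by
    rw [staleBlockGrad, ← blkProj_sub]
    exact (norm_blkProj_le _ _ _).trans
      ((hLip _ _).trans (mul_le_mul_of_nonneg_left (hx.norm_sub_stale_le hh i) hL))
  have hinner : ‖G i‖ ^ 2 - L * h * (∑ k ∈ Ico (i - τ) i, ‖G k‖) * ‖G i‖ ≤ ⟪g (x i), G i⟫ := by
    have hsplit : ⟪g (x i), G i⟫ = ‖G i‖ ^ 2 + ⟪blkProj blk (m i) (g (x i)) - G i, G i⟫ := by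
      rw [inner_sub_left, real_inner_self_eq_norm_sq, staleBlockGrad, ← inner_blkProj_right]
      ring
    have := (neg_abs_le _).trans' (neg_le_neg ((abs_real_inner_le_norm
      (blkProj blk (m i) (g (x i)) - G i) (G i)).trans
      (mul_le_mul_of_nonneg_right herr (norm_nonneg _))))
    rw [hsplit]
    linarith
  have hcard : (#(Ico (i - τ) i) : ℝ) ≤ τ := by
    rw [Nat.card_Ico]; exact_mod_cast (by omega : i - (i - τ) ≤ τ)
  have hamgm := (two_mul_sum_mul_le_sum_sq_add_card_mul_sq (Ico (i - τ) i) (fun k => ‖G k‖)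
    ‖G i‖).trans (add_le_add_right (mul_le_mul_of_nonneg_right hcard (sq_nonneg ‖G i‖)) _)
  have hLh2 : 0 ≤ L * h ^ 2 / 2 := by positivity
  linarith [mul_le_mul_of_nonneg_left hinner hh, mul_le_mul_of_nonneg_left hamgm hLh2]

lemma summable_sq (hx : StaleBlockDescent blk g h τ x y m)
    {f : EuclideanSpace ℝ (Fin P) → ℝ} {L fmin : ℝ} (hgrad : ∀ z, HasGradientAt f (g z) z)
    (hLip : ∀ z w, ‖g z - g w‖ ≤ L * ‖z - w‖) (hL : 0 ≤ L) (hf : ∀ z, fmin ≤ f z)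
    (hh : 0 < h) (hLh : L * h * (2 * τ + 1) < 2) :
    Summable fun i => ‖G i‖ ^ 2 := by
  refine summable_of_delayed_descent (fun i => sq_nonneg _) (fun i => hf (x i)) (by positivity)
    ?_ (hx.loss_succ_le hgrad hLip hL hh.le)
  nlinarith

lemma tendsto_norm_staleBlockGrad (hx : StaleBlockDescent blk g h τ x y m)
    {f : EuclideanSpace ℝ (Fin P) → ℝ} {L fmin : ℝ} (hgrad : ∀ z, HasGradientAt f (g z) z)
    (hLip : ∀ z w, ‖g z - g w‖ ≤ L * ‖z - w‖) (hL : 0 ≤ L) (hf : ∀ z, fmin ≤ f z)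
    (hh : 0 < h) (hLh : L * h * (2 * τ + 1) < 2) :
    Tendsto (fun i => ‖G i‖) atTop (nhds 0) := by
  simpa [Real.sqrt_sq (norm_nonneg _)] using
    (hx.summable_sq hgrad hLip hL hf hh hLh).tendsto_atTop_zero.sqrt

lemma norm_blkProj_grad_le (hx : StaleBlockDescent blk g h τ x y m) {L : ℝ}
    (hLip : ∀ z w, ‖g z - g w‖ ≤ L * ‖z - w‖) (hL : 0 ≤ L) (hh : 0 ≤ h) {j s : ℕ} (hjs : j < s) :
    ‖blkProj blk (m j) (g (x s))‖ ≤ (2 * L * h + 1) * ∑ k ∈ Ico (j - τ) s, ‖G k‖ := by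
  set W := ∑ k ∈ Ico (j - τ) s, ‖G k‖
  have hsub : ∀ {a b}, j - τ ≤ a → b ≤ s → ∑ k ∈ Ico a b, ‖G k‖ ≤ W := fun ha hb =>
    Finset.sum_le_sum_of_subset_of_nonneg (Finset.Ico_subset_Ico ha hb) fun _ _ _ => norm_nonneg _
  have hdrift : ‖blkProj blk (m j) (g (x s) - g (x j))‖ ≤ L * h * W :=
    calc _ ≤ L * ‖x s - x j‖ := (norm_blkProj_le _ _ _).trans (hLip _ _)
      _ ≤ L * (h * W) := mul_le_mul_of_nonneg_left ((hx.norm_sub_le hh hjs.le).trans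
          (mul_le_mul_of_nonneg_left (hsub (Nat.sub_le j τ) le_rfl) hh)) hL
      _ = L * h * W := by ring
  have hstale : ‖blkProj blk (m j) (g (x j) - g (y j))‖ ≤ L * h * W :=
    calc _ ≤ L * ‖x j - y j‖ := (norm_blkProj_le _ _ _).trans (hLip _ _)
      _ ≤ L * (h * W) := mul_le_mul_of_nonneg_left ((hx.norm_sub_stale_le hh j).trans
          (mul_le_mul_of_nonneg_left (hsub le_rfl hjs.le) hh)) hL
      _ = L * h * W := by ring
  have hcur : ‖G j‖ ≤ W :=
    Finset.single_le_sum (fun _ _ => norm_nonneg _) (Finset.mem_Ico.mpr ⟨Nat.sub_le j τ, hjs⟩)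
  have hsplit : blkProj blk (m j) (g (x s)) = blkProj blk (m j) (g (x s) - g (x j))
      + blkProj blk (m j) (g (x j) - g (y j)) + G j := by
    rw [blkProj_sub, blkProj_sub, staleBlockGrad]; abel
  rw [hsplit]
  linarith [norm_add₃_le (a := blkProj blk (m j) (g (x s) - g (x j)))
    (b := blkProj blk (m j) (g (x j) - g (y j))) (c := G j)]

lemma tendsto_norm_grad (hx : StaleBlockDescent blk g h τ x y m)
    {f : EuclideanSpace ℝ (Fin P) → ℝ} {L fmin : ℝ} (hgrad : ∀ z, HasGradientAt f (g z) z)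
    (hLip : ∀ z w, ‖g z - g w‖ ≤ L * ‖z - w‖) (hL : 0 ≤ L) (hf : ∀ z, fmin ≤ f z)
    (hh : 0 < h) (hLh : L * h * (2 * τ + 1) < 2) {K : ℕ}
    (hvisit : ∀ t n, ∃ j ∈ Ico (t * K) ((t + 1) * K), m j = n) :
    Tendsto (fun s => ‖g (x s)‖) atTop (nhds 0) := by
  set W := fun s => ∑ k ∈ Ico (s - (2 * K + τ)) s, ‖G k‖
  have hW : Tendsto W atTop (nhds 0) := tendsto_sum_Ico_sub_of_tendsto_zero
    (hx.tendsto_norm_staleBlockGrad hgrad hLip hL hf hh hLh) _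
  have hblock : ∀ s, K ≤ s → ∀ n, ‖blkProj blk n (g (x s))‖ ≤ (2 * L * h + 1) * W s := by
    intro s hs n
    obtain ⟨j, hjlo, hjs, rfl⟩ := exists_mem_window_of_forall_window hvisit hs n
    refine (hx.norm_blkProj_grad_le hLip hL hh.le hjs).trans
      (mul_le_mul_of_nonneg_left ?_ (by positivity))
    exact Finset.sum_le_sum_of_subset_of_nonneg (Finset.Ico_subset_Ico (by omega) le_rfl)
      fun _ _ _ => norm_nonneg _
  refine squeeze_zero' (Eventually.of_forall fun s => norm_nonneg _) ?_
    (by simpa using hW.const_mul ((N + 1) * (2 * L * h + 1)))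
  filter_upwards [eventually_ge_atTop K] with s hs
  calc ‖g (x s)‖ ≤ ∑ n, ‖blkProj blk n (g (x s))‖ := norm_le_sum_norm_blkProj blk _
    _ ≤ ∑ _n : Fin (N + 1), (2 * L * h + 1) * W s := Finset.sum_le_sum fun n _ => hblock s hs n
    _ = (N + 1) * (2 * L * h + 1) * W s := by
      rw [Finset.sum_const, Finset.card_univ, Fintype.card_fin, nsmul_eq_mul]; push_cast; ring

end StaleBlockDescent

end BlockIteration

theorem noiseless_gradient_tendsto_zero_general
    {P N E : ℕ} (hE : 1 ≤ E)
    (blk : Fin P → Fin (N + 1))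
    (𝓛 : EuclideanSpace ℝ (Fin P) → ℝ)
    (g : EuclideanSpace ℝ (Fin P) → EuclideanSpace ℝ (Fin P))
    (Lc Lstar η : ℝ) (τ : ℕ)
    (Θ : ℕ → EuclideanSpace ℝ (Fin P))
    (hatΘ : ℕ → Fin (N + 1) → EuclideanSpace ℝ (Fin P))
    (ms : ℕ → Fin (N + 1))
    -- Assumption 1
    (hLpos : 0 < Lc)
    (hgrad : ∀ x, HasGradientAt 𝓛 (g x) x)
    (hLip : ∀ x y, ‖g x - g y‖ ≤ Lc * ‖x - y‖)
    (hglb : IsGLB (Set.range 𝓛) Lstar)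
    -- schedule: each window of (N+1)E consecutive steps updates every block E times
    (hsched : ∀ t : ℕ, ∀ n : Fin (N + 1),
      ((Finset.Icc (t * ((N + 1) * E) + 1) ((t + 1) * ((N + 1) * E))).filter
        fun s => ms s = n).card = E)
    -- stale parameter copies
    (hstale : ∀ s, 1 ≤ s → ∀ n m : Fin (N + 1), ∃ r : ℕ,
      max 1 (s - τ) ≤ r ∧ r ≤ s ∧
      blkProj blk m (hatΘ s n) = blkProj blk m (Θ r))
    -- noiseless update
    (hupd : ∀ s, 1 ≤ s →
      Θ (s + 1) = Θ s - (η / Lc) • blkProj blk (ms s) (g (hatΘ s (ms s))))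
    -- Assumption 2
    (hηpos : 0 < η) (hηlt : η < 2 / (2 * (τ : ℝ) + 1)) :
    Tendsto (fun s : ℕ => ‖g (Θ s)‖ ^ 2) atTop (nhds 0) := by
  have hx : StaleBlockDescent blk g (η / Lc) τ (fun i => Θ (i + 1))
      (fun i => hatΘ (i + 1) (ms (i + 1))) (fun i => ms (i + 1)) := by
    refine ⟨fun i => hupd (i + 1) (Nat.le_add_left 1 i), fun i k => ?_⟩
    obtain ⟨r, hr, hri, hblock⟩ := hstale (i + 1) (Nat.le_add_left 1 i) (ms (i + 1)) k
    exact ⟨r - 1, by omega, by omega, by rwa [Nat.sub_add_cancel (le_of_max_le_left hr)]⟩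
  have hvisit : ∀ t n,
      ∃ j ∈ Ico (t * ((N + 1) * E)) ((t + 1) * ((N + 1) * E)), ms (j + 1) = n := by
    intro t n
    obtain ⟨s, hs⟩ := Finset.card_pos.mp ((hsched t n).symm ▸ hE)
    rw [mem_filter, mem_Icc] at hs
    refine ⟨s - 1, mem_Ico.mpr ⟨by omega, by omega⟩, ?_⟩
    rw [Nat.sub_add_cancel (by omega)]
    exact hs.2
  have hLh : Lc * (η / Lc) * (2 * τ + 1) < 2 := by
    rwa [mul_div_cancel₀ _ hLpos.ne', ← lt_div_iff₀ (by positivity)]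
  have hlim := hx.tendsto_norm_grad hgrad hLip hLpos.le (fun z => hglb.1 ⟨z, rfl⟩)
    (div_pos hηpos hLpos) hLh hvisit
  simpa using ((tendsto_add_atTop_iff_nat (f := fun s => ‖g (Θ s)‖) 1).mp hlim).pow 2

/-- Noiseless asynchronous block coordinate descent converges to a stationary
point: under Assumption 1 and Assumption 2, ‖∇𝓛(Θ^(s))‖² → 0 as s → ∞. -/
theorem noiseless_gradient_tendsto_zero
    {P N E : ℕ} (hE : 1 ≤ E)
    (blk : Fin P → Fin (N + 1))
    (𝓛 : EuclideanSpace ℝ (Fin P) → ℝ)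
    (g : EuclideanSpace ℝ (Fin P) → EuclideanSpace ℝ (Fin P))
    (Lc Lstar η α : ℝ) (τ : ℕ) (hτ : τ = (2 * N + 1) * E)
    (Θ : ℕ → EuclideanSpace ℝ (Fin P))
    (hatΘ : ℕ → Fin (N + 1) → EuclideanSpace ℝ (Fin P))
    (ms : ℕ → Fin (N + 1))
    -- Assumption 1
    (hLpos : 0 < Lc)
    (hgrad : ∀ x, HasGradientAt 𝓛 (g x) x)
    (hLip : ∀ x y, ‖g x - g y‖ ≤ Lc * ‖x - y‖)
    (hglb : IsGLB (Set.range 𝓛) Lstar)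
    -- schedule: each window of (N+1)E consecutive steps updates every block E times
    (hsched : ∀ t : ℕ, ∀ n : Fin (N + 1),
      ((Finset.Icc (t * ((N + 1) * E) + 1) ((t + 1) * ((N + 1) * E))).filter
        fun s => ms s = n).card = E)
    -- stale parameter copies
    (hstale : ∀ s, 1 ≤ s → ∀ n m : Fin (N + 1), ∃ r : ℕ,
      max 1 (s - τ) ≤ r ∧ r ≤ s ∧
      blkProj blk m (hatΘ s n) = blkProj blk m (Θ r))
    -- noiseless update
    (hupd : ∀ s, 1 ≤ s →
      Θ (s + 1) = Θ s - (η / Lc) • blkProj blk (ms s) (g (hatΘ s (ms s))))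
    -- Assumption 2
    (hηpos : 0 < η) (hηlt : η < 2 / (2 * (τ : ℝ) + 1))
    (hα : α = 2 / (η * (2 * (τ : ℝ) + 1))) (hα1 : 1 < α) :
    Tendsto (fun s : ℕ => ‖g (Θ s)‖ ^ 2) atTop (nhds 0) :=
  noiseless_gradient_tendsto_zero_general hE blk 𝓛 g Lc Lstar η τ Θ hatΘ ms hLpos hgrad hLip hglb
    hsched hstale hupd hηpos hηlt
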